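/- Let T be a phylogenetic tree with labeled vertex set L, let G be its distance graph, and let R : L → ℕ be an injective ranking. Let {i,j} ∈ E_T with Sg_R(i) ≠ Sg_R(j), and let V_i and V_j be the two vertex sets of the components of T obtained by deleting the edge {i,j}, with i ∈ V_i and j ∈ V_j; set L_i = L ∩ V_i and L_j = L ∩ V_j. Then Sg_R(i) ∈ L_i, Sg_R(j) ∈ L_j, and for every k ∈ L_i and l ∈ L_j with {k,l} ≠ {Sg_R(i), Sg_R(j)}, the edge {Sg_R(i), Sg_R(j)} precedes {k,l} in the order <_R; that is, {Sg_R(i), Sg_R(j)} is the <_R-minimum edge of G with one endpoint in L_i and the other in L_j. -/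

import Mathlib

open SimpleGraph

/-- The threshold subgraph `G_{≤ t}`: same vertices, only edges of weight `≤ t`. -/
def thresholdGraph {V : Type*} (G : SimpleGraph V) (w : Sym2 V → ℝ) (t : ℝ) :
    SimpleGraph V where
  Adj u v := G.Adj u v ∧ w s(u, v) ≤ t
  symm := by
    refine ⟨fun u v hv => ?_⟩
    exact ⟨hv.1.symm, by rw [Sym2.eq_swap]; exact hv.2⟩
  loopless := ⟨fun v hv => G.loopless.irrefl v hv.1⟩

/-- The strict threshold subgraph `G_{< t}`. -/
def strictThresholdGraph {V : Type*} (G : SimpleGraph V) (w : Sym2 V → ℝ) (t : ℝ) :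
    SimpleGraph V where
  Adj u v := G.Adj u v ∧ w s(u, v) < t
  symm := by
    refine ⟨fun u v hv => ?_⟩
    exact ⟨hv.1.symm, by rw [Sym2.eq_swap]; exact hv.2⟩
  loopless := ⟨fun v hv => G.loopless.irrefl v hv.1⟩

/-- The laminar family of an edge-weighted graph: the whole vertex set together with the
vertex sets of the connected components of every threshold subgraph. -/
def laminarFamily {V : Type*} (G : SimpleGraph V) (w : Sym2 V → ℝ) : Set (Set V) :=
  insert Set.univ
    {S | ∃ (t : ℝ) (C : (thresholdGraph G w t).ConnectedComponent), S = C.supp}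

/-- `M` is a spanning tree of `G`. -/
def IsSpanningTree {V : Type*} (G M : SimpleGraph V) : Prop :=
  M ≤ G ∧ M.IsTree

/-- Total weight of (the edges of) a graph. -/
noncomputable def totalWeight {V : Type*} [Finite V] (M : SimpleGraph V)
    (w : Sym2 V → ℝ) : ℝ :=
  ∑ e ∈ M.edgeSet.toFinite.toFinset, w e

/-- `M` is a minimum spanning tree of `G` with respect to the weights `w`. -/
def IsMST {V : Type*} [Finite V] (G : SimpleGraph V) (w : Sym2 V → ℝ)
    (M : SimpleGraph V) : Prop :=
  IsSpanningTree G M ∧ ∀ M' : SimpleGraph V, IsSpanningTree G M' →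
    totalWeight M w ≤ totalWeight M' w

/-- A phylogenetic tree: a finite tree with strictly positive edge lengths and a nonempty
set `L` of labeled vertices, each hidden vertex having degree at least 3. -/
structure PhyloTree (V : Type*) where
  finV : Finite V
  T : SimpleGraph V
  isTree : T.IsTree
  len : Sym2 V → ℝ
  len_pos : ∀ e ∈ T.edgeSet, 0 < len e
  L : Set V
  L_nonempty : L.Nonempty
  hidden_deg : ∀ v, v ∉ L → 3 ≤ (T.neighborSet v).ncard

namespace PhyloTree

variable {V : Type*}

/-- The unique path between two vertices of the tree. -/
noncomputable def path (P : PhyloTree V) (u v : V) : P.T.Walk u v :=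
  (P.isTree.existsUnique_path u v).exists.choose

lemma path_isPath (P : PhyloTree V) (u v : V) : (P.path u v).IsPath :=
  (P.isTree.existsUnique_path u v).exists.choose_spec

/-- The tree distance: the sum of the edge lengths along the unique path. -/
noncomputable def dist (P : PhyloTree V) (u v : V) : ℝ :=
  ((P.path u v).edges.map P.len).sum

lemma dist_comm (P : PhyloTree V) (u v : V) : P.dist u v = P.dist v u := by
  have h : (P.path u v).reverse = P.path v u :=
    (P.isTree.existsUnique_path v u).unique ((P.path_isPath u v).reverse)
      (P.path_isPath v u)
  unfold dist
  rw [← h, SimpleGraph.Walk.edges_reverse, List.map_reverse, List.sum_reverse]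

/-- The tree distance as a symmetric function on unordered pairs. -/
noncomputable def wdist (P : PhyloTree V) : Sym2 V → ℝ :=
  Sym2.lift ⟨fun u v => P.dist u v, fun u v => P.dist_comm u v⟩

/-- The surrogate set of a vertex: the labeled vertices closest to it. -/
def Sg (P : PhyloTree V) (h : V) : Set V :=
  {l | l ∈ P.L ∧ ∀ l' ∈ P.L, P.dist l h ≤ P.dist l' h}

/-- `s` is the surrogate vertex `Sg_R(h)` of `h` w.r.t. the ranking `R`:
the element of the surrogate set of `h` of smallest `R`-value. -/
def IsSgR (P : PhyloTree V) (R : V → ℕ) (h : V) (s : V) : Prop :=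
  s ∈ P.Sg h ∧ ∀ l ∈ P.Sg h, R s ≤ R l

/-- The edge weights of the distance graph of `P` (the complete graph on `↥P.L`). -/
noncomputable def wG (P : PhyloTree V) : Sym2 ↥P.L → ℝ :=
  fun e => P.wdist (e.map Subtype.val)

/-- An edge `e` of the distance graph lying in at least one MST (i.e. an edge of `g`). -/
def mstEdge (P : PhyloTree V) (e : Sym2 ↥P.L) : Prop :=
  haveI := P.finV
  ∃ M : SimpleGraph ↥P.L, IsMST (⊤ : SimpleGraph ↥P.L) P.wG M ∧ e ∈ M.edgeSet

/-- `δ_max(v)`: the maximum degree of `v` over all MSTs of the distance graph. -/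
noncomputable def deltaMax (P : PhyloTree V) (v : ↥P.L) : ℕ :=
  haveI := P.finV
  sSup {d : ℕ | ∃ M : SimpleGraph ↥P.L,
    IsMST (⊤ : SimpleGraph ↥P.L) P.wG M ∧ d = (M.neighborSet v).ncard}

end PhyloTree

/-- The smaller of the two ranks of the endpoints of an edge. -/
def sym2MinR {α : Type*} (R : α → ℕ) : Sym2 α → ℕ :=
  Sym2.lift ⟨fun a b => min (R a) (R b), fun a b => min_comm _ _⟩

/-- The larger of the two ranks of the endpoints of an edge. -/
def sym2MaxR {α : Type*} (R : α → ℕ) : Sym2 α → ℕ :=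
  Sym2.lift ⟨fun a b => max (R a) (R b), fun a b => max_comm _ _⟩

/-- The strict total order `<_R` on edges: first by weight, then by the smaller rank of
the endpoints, then by the larger rank of the endpoints. -/
def edgeLT {α : Type*} (w : Sym2 α → ℝ) (R : α → ℕ) (e f : Sym2 α) : Prop :=
  w e < w f ∨ (w e = w f ∧ (sym2MinR R e < sym2MinR R f ∨
    (sym2MinR R e = sym2MinR R f ∧ sym2MaxR R e < sym2MaxR R f)))

/-- `M` is the vertex-ranked MST of `G` w.r.t. the ranking `R`: a spanning tree such that
every non-tree edge `{u,v}` of `G` is the `<_R`-greatest edge of the cycle it closes,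
i.e. every edge of the `M`-path from `u` to `v` is `<_R`-smaller than `{u,v}`. -/
def IsVRMST {α : Type*} (G : SimpleGraph α) (w : Sym2 α → ℝ) (R : α → ℕ)
    (M : SimpleGraph α) : Prop :=
  IsSpanningTree G M ∧ ∀ u v : α, G.Adj u v → ¬M.Adj u v →
    ∀ p : M.Walk u v, p.IsPath → ∀ f ∈ p.edges, edgeLT w R f s(u, v)

/-!
Deleting the tree edge `ij` splits `T` into two sides, and for `u` on the side of `i` and `v` on
the side of `j` the tree path runs through `ij`: `d(u, v) = d(u, i) + ℓ(ij) + d(v, j)`. Hence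
distances to `i` and to `j` differ by exactly `ℓ(ij)`, so a surrogate of `i` on the side of `j`
would also be the surrogate of `j`; the two surrogates therefore lie on their own sides. For a
crossing pair `k, l` the same formula gives `d(k, l) ≥ d(Sg_R(i), Sg_R(j))`, with equality only
if `k ∈ Sg(i)` and `l ∈ Sg(j)`, where the ranking breaks the tie.
-/

namespace SimpleGraph

variable {V : Type*} {G H : SimpleGraph V}

lemma Reachable.reachable_deleteEdges_or {u i : V} (j : V) (h : G.Reachable u i) :
    (G.deleteEdges {s(i, j)}).Reachable u i ∨ (G.deleteEdges {s(i, j)}).Reachable u j := by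
  obtain ⟨p⟩ := h
  induction p with
  | nil => exact .inl .rfl
  | @cons u w i hadj _ ih =>
    by_cases he : s(u, w) = s(i, j)
    · rcases Sym2.eq_iff.mp he with ⟨rfl, -⟩ | ⟨rfl, -⟩
      · exact .inl .rfl
      · exact .inr .rfl
    · have hD : (G.deleteEdges {s(i, j)}).Adj u w := by simp [hadj, he]
      exact ih.imp hD.reachable.trans hD.reachable.trans

lemma Walk.IsPath.append_cons_of_not_reachable (hHG : H ≤ G) {u i j v : V}
    {p : H.Walk u i} {q : H.Walk j v} (hp : p.IsPath) (hq : q.IsPath) (hij : G.Adj i j)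
    (hsep : ¬ H.Reachable i j) :
    ((p.mapLe hHG).append (Walk.cons hij (q.mapLe hHG))).IsPath := by
  classical
  have hdisj : p.support.Disjoint q.support := fun x hxp hxq =>
    hsep <| Reachable.trans ⟨(p.dropUntil x hxp).reverse⟩ ⟨(q.takeUntil x hxq).reverse⟩
  rw [Walk.isPath_def, Walk.support_append, Walk.support_cons, List.tail_cons,
    Walk.support_mapLe_eq_support, Walk.support_mapLe_eq_support]
  exact hp.support_nodup.append hq.support_nodup hdisj

end SimpleGraph

namespace PhyloTree

variable {V : Type*} (P : PhyloTree V)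

lemma path_eq {u v : V} (p : P.T.Walk u v) (hp : p.IsPath) : P.path u v = p :=
  (P.isTree.existsUnique_path u v).unique (P.path_isPath u v) hp

lemma dist_eq_sum_of_isPath {u v : V} (p : P.T.Walk u v) (hp : p.IsPath) :
    P.dist u v = (p.edges.map P.len).sum := by
  rw [dist, P.path_eq p hp]

lemma dist_self (u : V) : P.dist u u = 0 := by
  simp [P.dist_eq_sum_of_isPath Walk.nil Walk.IsPath.nil]

lemma wdist_mk (u v : V) : P.wdist s(u, v) = P.dist u v := rfl

lemma not_reachable_deleteEdges {i j : V} (hij : P.T.Adj i j) :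
    ¬ (P.T.deleteEdges {s(i, j)}).Reachable i j :=
  isBridge_iff.mp (isAcyclic_iff_forall_adj_isBridge.mp P.isTree.isAcyclic hij)

lemma reachable_deleteEdges_or (i j u : V) :
    (P.T.deleteEdges {s(i, j)}).Reachable u i ∨ (P.T.deleteEdges {s(i, j)}).Reachable u j :=
  (P.isTree.connected.preconnected u i).reachable_deleteEdges_or j

lemma dist_eq_dist_add_len_add_dist {i j u v : V} (hij : P.T.Adj i j)
    (hu : (P.T.deleteEdges {s(i, j)}).Reachable u i)
    (hv : (P.T.deleteEdges {s(i, j)}).Reachable v j) :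
    P.dist u v = P.dist u i + P.len s(i, j) + P.dist v j := by
  have hle : P.T.deleteEdges {s(i, j)} ≤ P.T := deleteEdges_le _
  obtain ⟨p, hp⟩ := hu.exists_isPath
  obtain ⟨q, hq⟩ := hv.symm.exists_isPath
  rw [P.dist_eq_sum_of_isPath _ (hp.append_cons_of_not_reachable hle hq hij
      (P.not_reachable_deleteEdges hij)),
    P.dist_eq_sum_of_isPath _ (hp.mapLe hle), P.dist_comm v j,
    P.dist_eq_sum_of_isPath _ (hq.mapLe hle)]
  simp only [Walk.edges_append, Walk.edges_cons, Walk.edges_mapLe_eq_edges, List.map_append,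
    List.map_cons, List.sum_append, List.sum_cons]
  ring

lemma dist_left_or_right {i j : V} (hij : P.T.Adj i j) (u : V) :
    P.dist u j = P.dist u i + P.len s(i, j) ∨ P.dist u i = P.dist u j + P.len s(i, j) := by
  refine (P.reachable_deleteEdges_or i j u).imp (fun hu => ?_) (fun hu => ?_)
  · simpa [P.dist_self] using P.dist_eq_dist_add_len_add_dist hij hu .rfl
  · simpa [P.dist_self, P.dist_comm i, add_comm] using
      P.dist_eq_dist_add_len_add_dist hij .rfl hu

end PhyloTree

namespace PhyloTree.IsSgR

variable {V : Type*} {P : PhyloTree V} {R : V → ℕ} {h s l : V}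

lemma dist_le (hs : P.IsSgR R h s) (hl : l ∈ P.L) : P.dist s h ≤ P.dist l h :=
  hs.1.2 l hl

lemma rank_le_of_dist_le (hs : P.IsSgR R h s) (hl : l ∈ P.L)
    (hd : P.dist l h ≤ P.dist s h) : R s ≤ R l :=
  hs.2 l ⟨hl, fun _ hl' => hd.trans (hs.dist_le hl')⟩

lemma rank_lt_of_dist_le (hR : Set.InjOn R P.L) (hs : P.IsSgR R h s) (hl : l ∈ P.L)
    (hd : P.dist l h ≤ P.dist s h) (hls : l ≠ s) : R s < R l :=
  (hs.rank_le_of_dist_le hl hd).lt_of_ne fun hRl => hls (hR hl hs.1.1 hRl.symm)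

lemma eq (hR : Set.InjOn R P.L) (hs : P.IsSgR R h s) (hl : P.IsSgR R h l) : s = l :=
  hR hs.1.1 hl.1.1 (le_antisymm (hs.2 l hl.1) (hl.2 s hs.1))

/-- Distances to `i` and to `j` differ by exactly `len s(i, j)`, so a surrogate of `i` on the
side of `j` is also closest to `j`, and every labeled vertex closest to `j` is closest to `i`. -/
lemma of_reachable_deleteEdges {i j : V} (hij : P.T.Adj i j) (hs : P.IsSgR R i s)
    (hsj : (P.T.deleteEdges {s(i, j)}).Reachable s j) : P.IsSgR R j s := by
  have hlen : 0 < P.len s(i, j) := P.len_pos _ hij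
  have hsi : P.dist s i = P.dist s j + P.len s(i, j) := by
    simpa [P.dist_self, P.dist_comm i, add_comm] using
      P.dist_eq_dist_add_len_add_dist hij .rfl hsj
  have tri : ∀ l, P.dist l i ≤ P.dist l j + P.len s(i, j) ∧
      P.dist l j ≤ P.dist l i + P.len s(i, j) := fun l => by
    rcases P.dist_left_or_right hij l with h | h <;> constructor <;> linarith
  refine ⟨⟨hs.1.1, fun l hl => ?_⟩, fun l hl => hs.rank_le_of_dist_le hl.1 ?_⟩
  · linarith [hs.dist_le hl, tri l]
  · linarith [hl.2 s hs.1.1, tri l]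

end PhyloTree.IsSgR

namespace PhyloTree

variable {V : Type*} (P : PhyloTree V)

lemma reachable_deleteEdges_of_isSgR {R : V → ℕ} (hR : Set.InjOn R P.L) {i j si sj : V}
    (hij : P.T.Adj i j) (hsi : P.IsSgR R i si) (hsj : P.IsSgR R j sj) (hne : si ≠ sj) :
    (P.T.deleteEdges {s(i, j)}).Reachable si i :=
  (P.reachable_deleteEdges_or i j si).resolve_right fun h =>
    hne ((hsi.of_reachable_deleteEdges hij h).eq hR hsj)

end PhyloTree

lemma edgeLT_mk_of_weight_eq {α : Type*} {w : Sym2 α → ℝ} {R : α → ℕ} {a b c d : α}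
    (hw : w s(a, b) = w s(c, d)) (hac : R a ≤ R c) (hbd : R b ≤ R d)
    (hlt : R a < R c ∨ R b < R d) : edgeLT w R s(a, b) s(c, d) := by
  refine .inr ⟨hw, ?_⟩
  simp only [sym2MinR, sym2MaxR, Sym2.lift_mk]
  omega

/-- the edge between the surrogates of the endpoints of a tree edge is the
`<_R`-minimum edge of the distance graph crossing the split induced by that edge. -/
theorem surrogate_edge_is_min_crossing {V : Type*} (P : PhyloTree V) (R : V → ℕ)
    (hR : Set.InjOn R P.L) (i j si sj : V) (hij : P.T.Adj i j)
    (hsi : P.IsSgR R i si) (hsj : P.IsSgR R j sj) (hne : si ≠ sj) :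
    si ∈ P.L ∩ {u | (P.T.deleteEdges {s(i, j)}).Reachable u i} ∧
    sj ∈ P.L ∩ {u | (P.T.deleteEdges {s(i, j)}).Reachable u j} ∧
    ∀ k ∈ P.L ∩ {u | (P.T.deleteEdges {s(i, j)}).Reachable u i},
      ∀ l ∈ P.L ∩ {u | (P.T.deleteEdges {s(i, j)}).Reachable u j},
        s(k, l) ≠ s(si, sj) → edgeLT P.wdist R s(si, sj) s(k, l) := by
  have hsiI := P.reachable_deleteEdges_of_isSgR hR hij hsi hsj hne
  have hsjJ : (P.T.deleteEdges {s(i, j)}).Reachable sj j := by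
    simpa [Sym2.eq_swap] using P.reachable_deleteEdges_of_isSgR hR hij.symm hsj hsi hne.symm
  refine ⟨⟨hsi.1.1, hsiI⟩, ⟨hsj.1.1, hsjJ⟩, ?_⟩
  rintro k ⟨hkL, hkI⟩ l ⟨hlL, hlJ⟩ hkl
  have hk := hsi.dist_le hkL
  have hl := hsj.dist_le hlL
  have hcross : P.wdist s(k, l) - P.wdist s(si, sj) =
      (P.dist k i - P.dist si i) + (P.dist l j - P.dist sj j) := by
    rw [P.wdist_mk, P.wdist_mk, P.dist_eq_dist_add_len_add_dist hij hkI hlJ,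
      P.dist_eq_dist_add_len_add_dist hij hsiI hsjJ]
    ring
  rcases (show P.wdist s(si, sj) ≤ P.wdist s(k, l) by linarith).lt_or_eq with hlt | heq
  · exact .inl hlt
  have hki : P.dist k i ≤ P.dist si i := by linarith
  have hlj : P.dist l j ≤ P.dist sj j := by linarith
  refine edgeLT_mk_of_weight_eq heq (hsi.rank_le_of_dist_le hkL hki)
    (hsj.rank_le_of_dist_le hlL hlj) ?_
  by_cases hks : k = si
  · subst hks
    exact .inr (hsj.rank_lt_of_dist_le hR hlL hlj fun h => hkl (h ▸ rfl))
  · exact .inl (hsi.rank_lt_of_dist_le hR hkL hki hks)
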